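/- Let T be a nonnegative continuous survival time with conditional survival function S^C(t | x) = exp(-∫_0^t λ^C(s | x) ds) where λ^C(s | x) = λ_0^C(s) exp(βᵀx) is a Cox proportional hazards model. For a partition 0 = t_0 < t_1 < t_2 < ..., define the grouped discrete hazard λ_j(x) = P(T ≤ t_j | T > t_{j-1}, X = x). Then -log(1 - λ_j(x)) = -log(1 - λ_{0j}) · exp(βᵀx), where λ_{0j} = 1 - exp(-∫_{t_{j-1}}^{t_j} λ_0^C(s) ds). That is, the grouped data follow a discrete-time proportional hazards model under the complementary log transformation with the same regression coefficient β. -/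

import Mathlib

/-!
Over the interval `(t_{j-1}, t_j]` the conditional survival probability is the ratio
`S^C(t_j | x) / S^C(t_{j-1} | x) = exp(-exp(βᵀx) ∫_{t_{j-1}}^{t_j} λ₀^C)`,
because the cumulative baseline hazard is additive over adjacent intervals. Taking `-log`
leaves `exp(βᵀx)` times the cumulative baseline hazard of the interval, which is
`-log(1 - λ_{0j})`.
-/

open MeasureTheory

section SurvivalTime

variable {Ω : Type*} [MeasurableSpace Ω] (μ : Measure Ω) [IsFiniteMeasure μ]
  {T : Ω → ℝ} {a b : ℝ}

theorem measureReal_Ioc_eq_sub (hT : Measurable T) (hab : a ≤ b) :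
    μ.real {ω | a < T ω ∧ T ω ≤ b} = μ.real {ω | a < T ω} - μ.real {ω | b < T ω} := by
  have hsub : {ω | b < T ω} ⊆ {ω | a < T ω} := fun ω hω => hab.trans_lt hω
  rw [← measureReal_sdiff hsub (measurableSet_lt measurable_const hT)]
  congr 1
  ext ω
  simp [not_lt]

theorem one_sub_hazard_eq_div_survival (hT : Measurable T) (hab : a ≤ b)
    (ha : μ.real {ω | a < T ω} ≠ 0) :
    1 - μ.real {ω | a < T ω ∧ T ω ≤ b} / μ.real {ω | a < T ω} =
      μ.real {ω | b < T ω} / μ.real {ω | a < T ω} := by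
  rw [measureReal_Ioc_eq_sub μ hT hab]
  field_simp
  ring

end SurvivalTime

theorem grouped_cox_cloglog_general {Ω : Type*} [MeasurableSpace Ω]
    (μ : Measure Ω) [IsProbabilityMeasure μ] (T : Ω → ℝ) (hT : Measurable T)
    {d : ℕ} (β x : Fin d → ℝ) (lam0 : ℝ → ℝ)
    (hint : ∀ a b : ℝ, IntervalIntegrable lam0 volume a b)
    (hS : ∀ t : ℝ,
      (μ {ω | t < T ω}).toReal =
        Real.exp (-(Real.exp (∑ i, β i * x i) * ∫ s in (0:ℝ)..t, lam0 s)))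
    (tprev tcur : ℝ) (htt : tprev < tcur) :
    -Real.log (1 -
        (μ {ω | tprev < T ω ∧ T ω ≤ tcur}).toReal / (μ {ω | tprev < T ω}).toReal) =
      -Real.log (1 - (1 - Real.exp (-∫ s in tprev..tcur, lam0 s))) *
        Real.exp (∑ i, β i * x i) := by
  have hprev_ne : μ.real {ω | tprev < T ω} ≠ 0 := by
    rw [Measure.real, hS]
    exact (Real.exp_pos _).ne'
  have hcumulative := intervalIntegral.integral_add_adjacent_intervals (hint 0 tprev)
    (hint tprev tcur)
  rw [← Measure.real, ← Measure.real, one_sub_hazard_eq_div_survival μ hT htt.le hprev_ne,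
    Measure.real, Measure.real, hS, hS, ← Real.exp_sub, ← hcumulative, sub_sub_cancel,
    Real.log_exp, Real.log_exp]
  ring

/-- Grouping a continuous-time Cox model: if `P(T > t | x) = exp(-e^{βᵀx} ∫_0^t λ₀)`,
then the grouped discrete hazard `λ_j(x) = P(T ≤ t_j | T > t_{j-1}, x)` satisfies
`-log(1 - λ_j(x)) = -log(1 - λ_{0j}) · e^{βᵀx}` with
`λ_{0j} = 1 - exp(-∫_{t_{j-1}}^{t_j} λ₀)`. -/
theorem grouped_cox_cloglog {Ω : Type*} [MeasurableSpace Ω]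
    (μ : Measure Ω) [IsProbabilityMeasure μ] (T : Ω → ℝ) (hT : Measurable T)
    {d : ℕ} (β x : Fin d → ℝ) (lam0 : ℝ → ℝ) (hlam0 : ∀ s, 0 ≤ lam0 s)
    (hint : ∀ a b : ℝ, IntervalIntegrable lam0 volume a b)
    (hS : ∀ t : ℝ,
      (μ {ω | t < T ω}).toReal =
        Real.exp (-(Real.exp (∑ i, β i * x i) * ∫ s in (0:ℝ)..t, lam0 s)))
    (tprev tcur : ℝ) (h0 : 0 ≤ tprev) (htt : tprev < tcur)
    (hppos : 0 < ∫ s in tprev..tcur, lam0 s) :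
    -Real.log (1 -
        (μ {ω | tprev < T ω ∧ T ω ≤ tcur}).toReal / (μ {ω | tprev < T ω}).toReal) =
      -Real.log (1 - (1 - Real.exp (-∫ s in tprev..tcur, lam0 s))) *
        Real.exp (∑ i, β i * x i) :=
  grouped_cox_cloglog_general μ T hT β x lam0 hint hS tprev tcur htt
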